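/- arXiv:2205.07836 — 2 statements merged into one kernel-verified Lean document; each statement's English description precedes it below -/
import Mathlib

section
/- (Proposition 6, stronger just-identified tests.) In the just-identified setting, maintain Assumptions 1 and 2 and the labeling normalization (Assumption 5): for every k ∈ {1,…,n} and every response type s with ℙ(S=s) > 0, either s_k ≡ 0, or s_k ≡ 1, or (s_k(v) = 1 ⟺ v = k). Then: (i) in the unordered case D_k = 1[T = k], for all reals y ≤ y′ the matrix Var(Z)^{-1}·Cov(Z, 1[y ≤ Y ≤ y′]·D) is diagonal with non-negative diagonal entries; and (ii) for any X : Ω → {0,1} with ℙ(X=1) > 0 and Z independent of (X,S), the matrix Var(Z | X=1)^{-1}·Cov(Z, D | X=1) is diagonal with non-negative diagonal entries (conditional moments under ℙ(· | X=1)). -/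
open MeasureTheory ProbabilityTheory
open scoped ENNReal Classical

noncomputable section

variable {Ω : Type*} [MeasurableSpace Ω]

/-- Covariance of two real-valued random variables. -/
def covar (μ : Measure Ω) (X W : Ω → ℝ) : ℝ :=
  (∫ ω, X ω * W ω ∂μ) - (∫ ω, X ω ∂μ) * (∫ ω, W ω ∂μ)

/-- Covariance matrix of two random vectors. -/
def covarM (μ : Measure Ω) {a b : Type*} [Fintype a] [Fintype b]
    (X : Ω → a → ℝ) (W : Ω → b → ℝ) : Matrix a b ℝ :=
  Matrix.of fun i j => covar μ (fun ω => X ω i) (fun ω => W ω j)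

/-- Predicted treatments: the linear projection of `D` on `Z`,
`P = E[D] + Cov(D,Z)·Var(Z)⁻¹·(Z − E[Z])`. -/
def predT (μ : Measure Ω) {n m : ℕ} (D : Ω → Fin n → ℝ) (Z : Ω → Fin m → ℝ) :
    Ω → Fin n → ℝ :=
  fun ω k => (∫ ω', D ω' k ∂μ) +
    ∑ j, (covarM μ D Z * (covarM μ Z Z)⁻¹) k j * (Z ω j - ∫ ω', Z ω' j ∂μ)

/-- The residualized first instrument `P̃₁ = P₁ − (Cov(P₁,P₂)/Var(P₂))·P₂`
in the two-treatment case. -/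
def resid1 (μ : Measure Ω) {m : ℕ} (D : Ω → Fin 2 → ℝ) (Z : Ω → Fin m → ℝ) : Ω → ℝ :=
  fun ω => predT μ D Z ω 0 -
    (covar μ (fun ω' => predT μ D Z ω' 0) (fun ω' => predT μ D Z ω' 1) /
        covar μ (fun ω' => predT μ D Z ω' 1) (fun ω' => predT μ D Z ω' 1)) *
      predT μ D Z ω 1

/-- A square matrix is diagonal with non-negative diagonal entries. -/
def IsNonnegDiagonal {a : Type*} [DecidableEq a] (M : Matrix a a ℝ) : Prop :=
  (∀ i j, i ≠ j → M i j = 0) ∧ ∀ i, 0 ≤ M i i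

/-!
Write `q u = ℙ(V = u)`. If a variable `W` satisfies `𝔼[W; V = u] = q u * (a + c * 1[u = j])` for
every instrument value `u`, then `Cov(1[V = v], W) = c * Cov(1[V = v], 1[V = j])`. When this holds
for every column `W k` with `j = k + 1` and `c k ≥ 0`, we get `Cov(Z, W) = Var(Z) * diagonal c`,
hence `Var(Z)⁻¹ * Cov(Z, W) = diagonal c` (or `0`, Mathlib's inverse of a singular matrix).

For `W k = 1[G] * 1[S(V) ∈ R k]`, splitting by response type gives
`𝔼[W k; V = u] = q u * ∑ s, m s * 1[s u ∈ R k]` as soon as `ℙ(V = u, S = s, G) = q u * m s`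
whenever `s u ∈ R k`, and by the labeling normalization every type with `m s ≠ 0` contributes either
a constant or a non-negative bump at `k + 1`. In (i) the factorization holds because on
`{V = u, S = s}` the outcome is the potential outcome `Y(s u) = Y(k + 1)`, independent of `V`;
in (ii) because `V` is a function of `Z`, so it stays independent of `S` under `ℙ(· | X = 1)`.
-/

section Covariance

variable {ν : Measure Ω} {ι : Type*} [Fintype ι] [MeasurableSpace ι]
  [MeasurableSingletonClass ι] {V : Ω → ι} {W : Ω → ℝ}

lemma covar_indicator_preimage_eq (hV : Measurable V) (hW : Integrable W ν) {f : ι → ℝ}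
    (hf : ∀ u, ∫ ω in V ⁻¹' {u}, W ω ∂ν = ν.real (V ⁻¹' {u}) * f u) (u₀ : ι) :
    covar ν ((V ⁻¹' {u₀}).indicator 1) W =
      ν.real (V ⁻¹' {u₀}) * (f u₀ - ∑ u, ν.real (V ⁻¹' {u}) * f u) := by
  have hfiber : ∀ u : ι, MeasurableSet (V ⁻¹' {u}) := fun u => hV (measurableSet_singleton u)
  have hW_sum : ∫ ω, W ω ∂ν = ∑ u, ∫ ω in V ⁻¹' {u}, W ω ∂ν := by
    rw [← integral_iUnion_fintype hfiber (pairwise_disjoint_fiber V) fun _ => hW.integrableOn,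
      ← Set.preimage_iUnion, Set.iUnion_of_singleton, Set.preimage_univ, setIntegral_univ]
  have hmul : (fun ω => (V ⁻¹' {u₀}).indicator 1 ω * W ω) = (V ⁻¹' {u₀}).indicator W := by
    ext ω; by_cases h : ω ∈ V ⁻¹' {u₀} <;> simp [h]
  rw [covar, hmul, integral_indicator (hfiber u₀), integral_indicator_one (hfiber u₀), hW_sum,
    hf u₀, Finset.sum_congr rfl fun u _ => hf u]
  ring

lemma covar_indicator_preimage_eq_mul [IsProbabilityMeasure ν] [DecidableEq ι] (hV : Measurable V)
    (hW : Integrable W ν) {j : ι} {a c : ℝ}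
    (hf : ∀ u, ∫ ω in V ⁻¹' {u}, W ω ∂ν = ν.real (V ⁻¹' {u}) * (a + if u = j then c else 0))
    (u₀ : ι) :
    covar ν ((V ⁻¹' {u₀}).indicator 1) W =
      covar ν ((V ⁻¹' {u₀}).indicator 1) ((V ⁻¹' {j}).indicator 1) * c := by
  have hfiber : ∀ u : ι, MeasurableSet (V ⁻¹' {u}) := fun u => hV (measurableSet_singleton u)
  have hsum : ∑ u, ν.real (V ⁻¹' {u}) = 1 := by
    rw [sum_measureReal_preimage_singleton _ fun u _ => hfiber u]
    simp
  have hj : ∀ u, ∫ ω in V ⁻¹' {u}, (V ⁻¹' {j}).indicator 1 ω ∂ν =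
      ν.real (V ⁻¹' {u}) * if u = j then 1 else 0 := by
    intro u
    rw [setIntegral_indicator (hfiber j), Pi.one_def, setIntegral_const, smul_eq_mul, mul_one]
    by_cases h : u = j
    · simp [h]
    · simp [h, (pairwise_disjoint_fiber V h).inter_eq]
  rw [covar_indicator_preimage_eq hV hW hf, covar_indicator_preimage_eq hV
    ((integrable_const 1).indicator (hfiber j)) hj]
  simp only [mul_add, mul_ite, mul_one, mul_zero, Finset.sum_add_distrib, ← Finset.sum_mul,
    Finset.sum_ite_eq', Finset.mem_univ, if_true, hsum]
  split_ifs <;> ring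

end Covariance

def IsNonnegJumpAt {ι : Type*} [DecidableEq ι] (j : ι) (f : ι → ℝ) : Prop :=
  ∃ a c : ℝ, 0 ≤ c ∧ ∀ u, f u = a + if u = j then c else 0

lemma IsNonnegJumpAt.sum {ι σ : Type*} [DecidableEq ι] {j : ι} {t : Finset σ} {f : σ → ι → ℝ}
    (hf : ∀ s ∈ t, IsNonnegJumpAt j (f s)) : IsNonnegJumpAt j fun u => ∑ s ∈ t, f s u := by
  choose! a c hc hac using hf
  refine ⟨∑ s ∈ t, a s, ∑ s ∈ t, c s, Finset.sum_nonneg hc, fun u => ?_⟩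
  dsimp only
  rw [Finset.sum_congr rfl fun s hs => hac s hs u, Finset.sum_add_distrib]
  split_ifs <;> simp

lemma isNonnegJumpAt_ite {ι : Type*} [DecidableEq ι] {j : ι} {p : ι → Prop} [DecidablePred p]
    {m : ℝ} (hm : 0 ≤ m) (hp : m ≠ 0 → (∀ u, ¬ p u) ∨ (∀ u, p u) ∨ ∀ u, p u ↔ u = j) :
    IsNonnegJumpAt j fun u => if p u then m else 0 := by
  rcases eq_or_ne m 0 with rfl | hm0
  · exact ⟨0, 0, le_rfl, fun u => by simp⟩
  rcases hp hm0 with h | h | h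
  · exact ⟨0, 0, le_rfl, fun u => by simp [h u]⟩
  · exact ⟨m, 0, le_rfl, fun u => by simp [h u]⟩
  · exact ⟨0, m, hm, fun u => by simp [h u]⟩

lemma isNonnegDiagonal_inv_mul_mul_diagonal {n : Type*} [Fintype n] [DecidableEq n]
    (A : Matrix n n ℝ) {c : n → ℝ} (hc : 0 ≤ c) :
    IsNonnegDiagonal (A⁻¹ * (A * Matrix.diagonal c)) := by
  by_cases hA : IsUnit A.det
  · rw [← Matrix.mul_assoc, Matrix.nonsing_inv_mul A hA, Matrix.one_mul]
    exact ⟨fun i j hij => Matrix.diagonal_apply_ne c hij, fun i => by simpa using hc i⟩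
  · rw [Matrix.nonsing_inv_apply_not_isUnit A hA, Matrix.zero_mul]
    exact ⟨fun _ _ _ => rfl, fun _ => le_rfl⟩

theorem isNonnegDiagonal_inv_covarM_mul_of_isNonnegJumpAt {ν : Measure Ω} [IsProbabilityMeasure ν]
    {n : ℕ} {V : Ω → Fin (n + 1)} (hV : Measurable V) {Z : Ω → Fin n → ℝ}
    (hZ : ∀ ω v, Z ω v = if V ω = v.succ then 1 else 0) {W : Ω → Fin n → ℝ}
    (hW : ∀ k, Integrable (fun ω => W ω k) ν) {f : Fin n → Fin (n + 1) → ℝ}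
    (hf : ∀ k, IsNonnegJumpAt k.succ (f k))
    (hWf : ∀ k u, ∫ ω in V ⁻¹' {u}, W ω k ∂ν = ν.real (V ⁻¹' {u}) * f k u) :
    IsNonnegDiagonal ((covarM ν Z Z)⁻¹ * covarM ν Z W) := by
  choose a c hc hac using hf
  have hZv : ∀ v, (fun ω => Z ω v) = (V ⁻¹' {v.succ}).indicator 1 := fun v => by
    ext ω; simp [hZ, Set.indicator_apply]
  suffices covarM ν Z W = covarM ν Z Z * Matrix.diagonal c by
    rw [this]; exact isNonnegDiagonal_inv_mul_mul_diagonal _ hc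
  ext v k
  simp only [covarM, Matrix.mul_diagonal, Matrix.of_apply, hZv]
  exact covar_indicator_preimage_eq_mul hV (a := a k) (hW k) (fun u => by rw [hWf, hac]) _

lemma setIntegral_indicator_response {ν : Measure Ω} [IsFiniteMeasure ν] {ι σ : Type*}
    [MeasurableSpace ι] [MeasurableSingletonClass ι] [Countable ι]
    [MeasurableSpace σ] [MeasurableSingletonClass σ] [Countable σ]
    {V : Ω → ι} (hV : Measurable V) {S : Ω → σ} (hS : Measurable S) {𝒮 : Finset σ}
    (hS𝒮 : ∀ ω, S ω ∈ 𝒮) {G : Set Ω} (hG : MeasurableSet G)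
    (p : σ → ι → Prop) [∀ s u, Decidable (p s u)] {m : σ → ℝ}
    (hfac : ∀ s ∈ 𝒮, ∀ u, p s u →
      ν.real (V ⁻¹' {u} ∩ S ⁻¹' {s} ∩ G) = ν.real (V ⁻¹' {u}) * m s) (u : ι) :
    ∫ ω in V ⁻¹' {u}, (G ∩ {ω | p (S ω) (V ω)}).indicator 1 ω ∂ν =
      ν.real (V ⁻¹' {u}) * ∑ s ∈ 𝒮, if p s u then m s else 0 := by
  have hp : MeasurableSet {ω | p (S ω) (V ω)} :=
    (hS.prodMk hV) (MeasurableSet.of_discrete (s := {x : σ × ι | p x.1 x.2}))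
  have hunion : V ⁻¹' {u} ∩ (G ∩ {ω | p (S ω) (V ω)}) =
      ⋃ s ∈ 𝒮.filter (p · u), V ⁻¹' {u} ∩ S ⁻¹' {s} ∩ G := by
    ext ω
    simp only [Set.mem_inter_iff, Set.mem_preimage, Set.mem_singleton_iff, Set.mem_ofPred_eq,
      Set.mem_iUnion, Finset.mem_filter, exists_prop]
    constructor
    · rintro ⟨rfl, hωG, hωp⟩
      exact ⟨S ω, ⟨hS𝒮 ω, hωp⟩, ⟨rfl, rfl⟩, hωG⟩
    · rintro ⟨s, ⟨-, hsp⟩, ⟨rfl, rfl⟩, hωG⟩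
      exact ⟨rfl, hωG, hsp⟩
  have hdisj : Set.PairwiseDisjoint ↑(𝒮.filter (p · u)) fun s => V ⁻¹' {u} ∩ S ⁻¹' {s} ∩ G :=
    fun s _ s' _ hss' => ((pairwise_disjoint_fiber S hss').mono
      (Set.inter_subset_left.trans Set.inter_subset_right)
      (Set.inter_subset_left.trans Set.inter_subset_right))
  rw [setIntegral_indicator (hG.inter hp), Pi.one_def, setIntegral_const, smul_eq_mul, mul_one,
    hunion, measureReal_biUnion_finset hdisj fun s _ =>
      ((hV (measurableSet_singleton u)).inter (hS (measurableSet_singleton s))).inter hG,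
    Finset.sum_filter, Finset.mul_sum]
  refine Finset.sum_congr rfl fun s hs => ?_
  split_ifs with hsu
  · exact hfac s hs u hsu
  · rw [mul_zero]

theorem isNonnegDiagonal_inv_covarM_mul_of_responses {ν : Measure Ω} [IsProbabilityMeasure ν]
    {n : ℕ} {V : Ω → Fin (n + 1)} (hV : Measurable V) {Z : Ω → Fin n → ℝ}
    (hZ : ∀ ω v, Z ω v = if V ω = v.succ then 1 else 0)
    {𝒮 : Finset (Fin (n + 1) → Fin (n + 1))} {S : Ω → Fin (n + 1) → Fin (n + 1)}
    (hS : Measurable S) (hS𝒮 : ∀ ω, S ω ∈ 𝒮) (R : Fin n → Finset (Fin (n + 1)))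
    {G : Fin n → Set Ω} (hG : ∀ k, MeasurableSet (G k))
    {m : Fin n → (Fin (n + 1) → Fin (n + 1)) → ℝ} (hm : ∀ k s, 0 ≤ m k s)
    (hfac : ∀ k, ∀ s ∈ 𝒮, ∀ u, s u ∈ R k →
      ν.real (V ⁻¹' {u} ∩ S ⁻¹' {s} ∩ G k) = ν.real (V ⁻¹' {u}) * m k s)
    (hnorm : ∀ k, ∀ s ∈ 𝒮, m k s ≠ 0 →
      (∀ v, s v ∉ R k) ∨ (∀ v, s v ∈ R k) ∨ ∀ v, s v ∈ R k ↔ v = k.succ)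
    {W : Ω → Fin n → ℝ} (hW : ∀ ω k, W ω k = (G k ∩ {ω | S ω (V ω) ∈ R k}).indicator 1 ω) :
    IsNonnegDiagonal ((covarM ν Z Z)⁻¹ * covarM ν Z W) := by
  obtain rfl : W = _ := funext fun ω => funext (hW ω)
  exact isNonnegDiagonal_inv_covarM_mul_of_isNonnegJumpAt hV hZ
    (fun k => (integrable_const 1).indicator ((hG k).inter
      ((hS.prodMk hV) (MeasurableSet.of_discrete
        (s := {x : (Fin (n + 1) → Fin (n + 1)) × Fin (n + 1) | x.1 x.2 ∈ R k})))))
    (fun k => IsNonnegJumpAt.sum fun s hs => isNonnegJumpAt_ite (hm k s) (hnorm k s hs))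
    (fun k => setIntegral_indicator_response hV hS hS𝒮 (hG k) (fun s u => s u ∈ R k) (hfac k))

lemma comap_le_comap_of_eq_ite {α : Type*} {n : ℕ} {V : α → Fin (n + 1)} {Z : α → Fin n → ℝ}
    (hZ : ∀ ω v, Z ω v = if V ω = v.succ then 1 else 0) :
    MeasurableSpace.comap V inferInstance ≤ MeasurableSpace.comap Z inferInstance := by
  set e : Fin (n + 1) → Fin n → ℝ := fun u v => if u = v.succ then 1 else 0
  have he : Function.Injective e := by
    intro a b h
    have hv : ∀ v : Fin n, a = v.succ ↔ b = v.succ := fun v => by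
      have := congrFun h v
      simp only [e] at this
      split_ifs at this <;> simp_all
    cases a using Fin.cases <;> cases b using Fin.cases <;>
      simp_all [eq_comm (a := (0 : Fin (n + 1)))]
  refine Measurable.comap_le (@measurable_to_countable' _ _ _ _ (MeasurableSpace.comap Z _) _
    fun u => ⟨{e u}, measurableSet_singleton _, ?_⟩)
  ext ω
  simp [show Z ω = e (V ω) from funext (hZ ω), he.eq_iff]

lemma ProbabilityTheory.IndepFun.of_comap_le_left {μ : Measure Ω} {β β' γ : Type*}
    [mβ : MeasurableSpace β] [mβ' : MeasurableSpace β'] [MeasurableSpace γ]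
    {f : Ω → β} {f' : Ω → β'} {g : Ω → γ}
    (h : IndepFun f g μ) (hle : mβ'.comap f' ≤ mβ.comap f) : IndepFun f' g μ :=
  (IndepFun_iff_Indep _ _ _).2 (indep_of_indep_of_le_left ((IndepFun_iff_Indep _ _ _).1 h) hle)

lemma indepFun_cond_of_indepFun_prod {μ : Measure Ω} [IsFiniteMeasure μ] {β γ δ : Type*}
    [MeasurableSpace β] [MeasurableSingletonClass β] [MeasurableSpace γ] [MeasurableSpace δ]
    {V : Ω → γ} {X : Ω → β} {S : Ω → δ} (hX : Measurable X)
    (h : IndepFun V (fun ω => (X ω, S ω)) μ) {x : β} (hx : μ (X ⁻¹' {x}) ≠ 0) :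
    IndepFun V S (μ[|X ⁻¹' {x}]) := by
  rw [indepFun_iff_measure_inter_preimage_eq_mul]
  intro A B hA hB
  have key : ∀ B, MeasurableSet B →
      μ (V ⁻¹' A ∩ (X ⁻¹' {x} ∩ S ⁻¹' B)) = μ (V ⁻¹' A) * μ (X ⁻¹' {x} ∩ S ⁻¹' B) := fun B hB => by
    simpa only [Set.mk_preimage_prod] using
      h.measure_inter_preimage_eq_mul A ({x} ×ˢ B) hA ((measurableSet_singleton x).prod hB)
  have hE := hX (measurableSet_singleton x)
  have hVA : μ (X ⁻¹' {x} ∩ V ⁻¹' A) = μ (V ⁻¹' A) * μ (X ⁻¹' {x}) := by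
    simpa [Set.inter_comm] using key Set.univ MeasurableSet.univ
  rw [cond_apply hE, cond_apply hE, cond_apply hE, Set.inter_left_comm, key B hB, hVA]
  calc (μ (X ⁻¹' {x}))⁻¹ * (μ (V ⁻¹' A) * μ (X ⁻¹' {x} ∩ S ⁻¹' B))
      = μ (V ⁻¹' A) * ((μ (X ⁻¹' {x}))⁻¹ * μ (X ⁻¹' {x})) *
          ((μ (X ⁻¹' {x}))⁻¹ * μ (X ⁻¹' {x} ∩ S ⁻¹' B)) := by
        rw [ENNReal.inv_mul_cancel hx (measure_ne_top μ _)]; ring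
    _ = _ := by ring

lemma measureReal_inter_outcome_eq_mul {μ : Measure Ω} {ι τ : Type*} [Countable ι]
    [MeasurableSpace ι] [MeasurableSingletonClass ι] [MeasurableSpace τ]
    [MeasurableSingletonClass τ] {Ypot : τ → Ω → ℝ} {S : Ω → ι → τ} {V : Ω → ι} {T : Ω → τ}
    (hTS : ∀ ω, T ω = S ω (V ω)) (hindep : IndepFun (fun ω => ((fun j => Ypot j ω), S ω)) V μ)
    (s : ι → τ) (u : ι) {B : Set ℝ} (hB : MeasurableSet B) :
    μ.real (V ⁻¹' {u} ∩ S ⁻¹' {s} ∩ (fun ω => Ypot (T ω) ω) ⁻¹' B) =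
      μ.real (V ⁻¹' {u}) * μ.real {ω | Ypot (s u) ω ∈ B ∧ S ω = s} := by
  have hC : MeasurableSet {p : (τ → ℝ) × (ι → τ) | p.1 (s u) ∈ B ∧ p.2 = s} :=
    (((measurable_pi_apply (s u)).comp measurable_fst) hB).inter
      (measurable_snd (measurableSet_singleton s))
  have hset : V ⁻¹' {u} ∩ S ⁻¹' {s} ∩ (fun ω => Ypot (T ω) ω) ⁻¹' B =
      (fun ω => ((fun j => Ypot j ω), S ω)) ⁻¹' {p | p.1 (s u) ∈ B ∧ p.2 = s} ∩ V ⁻¹' {u} := by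
    ext ω
    simp only [Set.mem_inter_iff, Set.mem_preimage, Set.mem_singleton_iff, Set.mem_ofPred_eq,
      hTS]
    constructor
    · rintro ⟨⟨rfl, rfl⟩, hB⟩; exact ⟨⟨hB, rfl⟩, rfl⟩
    · rintro ⟨⟨hB, rfl⟩, rfl⟩; exact ⟨⟨rfl, rfl⟩, hB⟩
  rw [hset, measureReal_def, hindep.measure_inter_preimage_eq_mul _ _ hC
    (measurableSet_singleton u), ENNReal.toReal_mul, mul_comm]
  rfl

theorem tsls_just_identified_stronger_tests_general
    (μ : Measure Ω) [IsProbabilityMeasure μ]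
    {n : ℕ}
    (T : Ω → Fin (n + 1)) (Ypot : Fin (n + 1) → Ω → ℝ)
    (V : Ω → Fin (n + 1)) (Z : Ω → Fin n → ℝ)
    (𝒮 : Finset (Fin (n + 1) → Fin (n + 1)))
    (S : Ω → Fin (n + 1) → Fin (n + 1))
    (R : Fin n → Finset (Fin (n + 1)))
    (D : Ω → Fin n → ℝ)
    -- measurability and integrability
    (hVmeas : Measurable V)
    (hSmeas : ∀ s, MeasurableSet {ω | S ω = s})
    (hYmeas : Measurable (fun ω => Ypot (T ω) ω))
    -- instruments built from the randomly assigned instrument value V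
    (hZ : ∀ ω v, Z ω v = if V ω = Fin.succ v then (1 : ℝ) else 0)
    -- response types, treatment indicators, outcome equation
    (hS𝒮 : ∀ ω, S ω ∈ 𝒮)
    (hTS : ∀ ω, T ω = S ω (V ω))
    (hD : ∀ ω k, D ω k = if T ω ∈ R k then (1 : ℝ) else 0)
    -- Assumption 1 (exogeneity and exclusion)
    (hindep : IndepFun (fun ω => ((fun j => Ypot j ω), S ω)) V μ)
    -- Assumption 5 (labeling normalization): instrument k only affects treatment k
    (hnorm : ∀ k : Fin n, ∀ s ∈ 𝒮, 0 < μ {ω | S ω = s} →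
      (∀ v, s v ∉ R k) ∨ (∀ v, s v ∈ R k) ∨ (∀ v, s v ∈ R k ↔ v = Fin.succ k)) :
    -- (i) unordered case: Kitagawa-style test with Z in place of P
    ((∀ k : Fin n, ∀ t : Fin (n + 1), t ∈ R k ↔ t = Fin.succ k) →
      ∀ y y' : ℝ, y ≤ y' →
        IsNonnegDiagonal
          ((covarM μ Z Z)⁻¹ *
            covarM μ Z
              (fun ω k =>
                (if y ≤ Ypot (T ω) ω ∧ Ypot (T ω) ω ≤ y' then (1 : ℝ) else 0) *
                  D ω k))) ∧
    -- (ii) subsample test with Z in place of P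
    (∀ X : Ω → Bool, Measurable X → 0 < μ {ω | X ω = true} →
      IndepFun Z (fun ω => (X ω, S ω)) μ →
        IsNonnegDiagonal
          ((covarM (μ[|{ω | X ω = true}]) Z Z)⁻¹ *
            covarM (μ[|{ω | X ω = true}]) Z D)) := by
  have hS : Measurable S := measurable_to_countable' hSmeas
  refine ⟨fun hunord y y' _ => ?_, fun X hX hXpos hZXS => ?_⟩
  · refine isNonnegDiagonal_inv_covarM_mul_of_responses hVmeas hZ hS hS𝒮 R
      (G := fun _ => (fun ω => Ypot (T ω) ω) ⁻¹' Set.Icc y y') (fun _ => hYmeas measurableSet_Icc)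
      (m := fun k s => μ.real {ω | Ypot k.succ ω ∈ Set.Icc y y' ∧ S ω = s})
      (fun _ _ => measureReal_nonneg) (fun k s _ u hsu => ?_) (fun k s hs hm => hnorm k s hs ?_)
      fun ω k => by
        simp only [Set.indicator_apply, hD, hTS, Set.mem_inter_iff, Set.mem_preimage, Set.mem_Icc,
          Set.mem_ofPred_eq, Pi.one_apply, ite_zero_mul_ite_zero, mul_one]
    · rw [measureReal_inter_outcome_eq_mul hTS hindep s u measurableSet_Icc, (hunord k _).1 hsu]
    · exact (pos_iff_ne_zero.2 ((measureReal_ne_zero_iff).1 hm)).trans_le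
        (measure_mono fun ω hω => hω.2)
  · have : IsProbabilityMeasure (μ[|{ω | X ω = true}]) := cond_isProbabilityMeasure hXpos.ne'
    have hVS : IndepFun V S (μ[|{ω | X ω = true}]) :=
      indepFun_cond_of_indepFun_prod hX (hZXS.of_comap_le_left (comap_le_comap_of_eq_ite hZ))
        hXpos.ne'
    refine isNonnegDiagonal_inv_covarM_mul_of_responses hVmeas hZ hS hS𝒮 R
      (fun _ => MeasurableSet.univ) (m := fun _ s => (μ[|{ω | X ω = true}]).real (S ⁻¹' {s}))
      (fun _ _ => measureReal_nonneg) (fun k s _ u _ => ?_) (fun k s hs hm => hnorm k s hs ?_)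
      fun ω k => by simp [Set.indicator_apply, hD, hTS]
    · rw [Set.inter_univ, measureReal_def, hVS.measure_inter_preimage_eq_mul _ _
        (measurableSet_singleton u) (measurableSet_singleton s), ENNReal.toReal_mul]
      rfl
    · exact pos_iff_ne_zero.2 fun h0 =>
        hm ((measureReal_eq_zero_iff).2 (cond_absolutelyContinuous h0))

/-- (Proposition 6, stronger just-identified tests.) In the just-identified setting,
under Assumptions 1–2 and the labeling normalization (Assumption 5), (i) in the
unordered case, for all `y ≤ y'`, `Var(Z)⁻¹·Cov(Z, 1[y ≤ Y ≤ y']·D)` is non-negative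
diagonal, and (ii) for any pre-determined binary `X`, `Var(Z|X=1)⁻¹·Cov(Z,D|X=1)` is
non-negative diagonal. -/
theorem tsls_just_identified_stronger_tests
    (μ : Measure Ω) [IsProbabilityMeasure μ]
    {n : ℕ}
    (T : Ω → Fin (n + 1)) (Ypot : Fin (n + 1) → Ω → ℝ)
    (V : Ω → Fin (n + 1)) (Z : Ω → Fin n → ℝ)
    (𝒮 : Finset (Fin (n + 1) → Fin (n + 1)))
    (S : Ω → Fin (n + 1) → Fin (n + 1))
    (R : Fin n → Finset (Fin (n + 1)))
    (D : Ω → Fin n → ℝ) (α : Ω → ℝ) (β : Ω → Fin n → ℝ)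
    (afun : (Fin (n + 1) → ℝ) → ℝ) (bfun : Fin n → (Fin (n + 1) → ℝ) → ℝ)
    -- measurability and integrability
    (hVmeas : Measurable V)
    (hSmeas : ∀ s, MeasurableSet {ω | S ω = s})
    (hYmeas : Measurable (fun ω => Ypot (T ω) ω))
    (hYint : Integrable (fun ω => Ypot (T ω) ω) μ)
    -- instruments built from the randomly assigned instrument value V
    (hZ : ∀ ω v, Z ω v = if V ω = Fin.succ v then (1 : ℝ) else 0)
    (hVpos : ∀ v, 0 < μ {ω | V ω = v})
    -- response types, treatment indicators, outcome equation
    (hS𝒮 : ∀ ω, S ω ∈ 𝒮)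
    (hTS : ∀ ω, T ω = S ω (V ω))
    (hD : ∀ ω k, D ω k = if T ω ∈ R k then (1 : ℝ) else 0)
    (hα : ∀ ω, α ω = afun fun j => Ypot j ω)
    (hβ : ∀ ω k, β ω k = bfun k fun j => Ypot j ω)
    (hY : ∀ ω, Ypot (T ω) ω = α ω + ∑ k, D ω k * β ω k)
    -- Assumption 1 (exogeneity and exclusion)
    (hindep : IndepFun (fun ω => ((fun j => Ypot j ω), S ω)) V μ)
    -- Assumption 2 (rank): Cov(Z,D) is invertible
    (hrank : IsUnit (covarM μ Z D).det)
    -- Assumption 5 (labeling normalization): instrument k only affects treatment k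
    (hnorm : ∀ k : Fin n, ∀ s ∈ 𝒮, 0 < μ {ω | S ω = s} →
      (∀ v, s v ∉ R k) ∨ (∀ v, s v ∈ R k) ∨ (∀ v, s v ∈ R k ↔ v = Fin.succ k)) :
    -- (i) unordered case: Kitagawa-style test with Z in place of P
    ((∀ k : Fin n, ∀ t : Fin (n + 1), t ∈ R k ↔ t = Fin.succ k) →
      ∀ y y' : ℝ, y ≤ y' →
        IsNonnegDiagonal
          ((covarM μ Z Z)⁻¹ *
            covarM μ Z
              (fun ω k =>
                (if y ≤ Ypot (T ω) ω ∧ Ypot (T ω) ω ≤ y' then (1 : ℝ) else 0) *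
                  D ω k))) ∧
    -- (ii) subsample test with Z in place of P
    (∀ X : Ω → Bool, Measurable X → 0 < μ {ω | X ω = true} →
      IndepFun Z (fun ω => (X ω, S ω)) μ →
        IsNonnegDiagonal
          ((covarM (μ[|{ω | X ω = true}]) Z Z)⁻¹ *
            covarM (μ[|{ω | X ω = true}]) Z D)) :=
  tsls_just_identified_stronger_tests_general μ T Ypot V Z 𝒮 S R D hVmeas hSmeas hYmeas hZ hS𝒮 hTS
    hD hindep hnorm
end
end

section
/- (Proposition: necessity of knowing next-best alternatives.) Let n ≥ 1 and let 𝒮₀ be any set of functions s : {0,1,…,n} → {0,1,…,n}, with indicators s_k(v) = 1[s(v) = k]. The following are equivalent: (A) for every s ∈ 𝒮₀ and every k ∈ {1,…,n}, either s_k(v) = 0 for all v, or s_k(v) = 1 for all v, or (s_k(v) = 1 ⟺ v = k); (B) every s ∈ 𝒮₀ satisfies all three of: (1) monotonicity: s_k(k) ≥ s_k(0) for all k ∈ {1,…,n}; (2) irrelevance: for all k,l ∈ {1,…,n}, if s_k(k) = s_k(0) then s_l(k) = s_l(0); (3) next-best alternative or always-taker: either s(0) = 0, or there exists k such that s(v)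 = k for all v ∈ {0,…,n}. -/
/-- (Necessity of knowing next-best alternatives.) For any set `𝒮₀` of response types
`s : {0,…,n} → {0,…,n}` with unordered indicators `s_k(v) = 1[s(v) = k]`, the following
are equivalent: (A) for every `s ∈ 𝒮₀` and `k ∈ {1,…,n}`, either `s_k ≡ 0`, or
`s_k ≡ 1`, or `s_k(v) = 1 ⟺ v = k`; (B) every `s ∈ 𝒮₀` satisfies monotonicity
(`s_k(k) ≥ s_k(0)`), irrelevance (`s_k(k) = s_k(0) → s_l(k) = s_l(0)`), and the
next-best-alternative-or-always-taker condition (`s(0) = 0` or `s` is constant). -/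
theorem next_best_alternatives_necessary
    (n : ℕ) (hn : 1 ≤ n)
    (𝒮₀ : Set (Fin (n + 1) → Fin (n + 1))) :
    (∀ s ∈ 𝒮₀, ∀ k : Fin n,
        (∀ v, s v ≠ Fin.succ k) ∨ (∀ v, s v = Fin.succ k) ∨
          (∀ v, s v = Fin.succ k ↔ v = Fin.succ k)) ↔
      (∀ s ∈ 𝒮₀,
        -- (1) monotonicity: s_k(k) ≥ s_k(0)
        (∀ k : Fin n, s 0 = Fin.succ k → s (Fin.succ k) = Fin.succ k) ∧
        -- (2) irrelevance: s_k(k) = s_k(0) implies s_l(k) = s_l(0)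
        (∀ k l : Fin n,
          ((s (Fin.succ k) = Fin.succ k) ↔ (s 0 = Fin.succ k)) →
            ((s (Fin.succ k) = Fin.succ l) ↔ (s 0 = Fin.succ l))) ∧
        -- (3) next-best alternative or always-taker
        (s 0 = 0 ∨ ∃ k : Fin (n + 1), ∀ v, s v = k)) := by
  constructor
  · intro hA s hs
    refine ⟨?_, ?_, ?_⟩
    · intro k h0
      rcases hA s hs k with h | h | h
      · exact absurd h0 (h 0)
      · exact h _
      · exact absurd ((h 0).mp h0) (Fin.succ_ne_zero k).symm
    · intro k l hkl
      rcases hA s hs l with h | h | h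
      · constructor
        · intro h'; exact absurd h' (h _)
        · intro h'; exact absurd h' (h 0)
      · exact ⟨fun _ => h 0, fun _ => h _⟩
      · have hkne : k ≠ l := by
          rintro rfl
          have h1 : s (Fin.succ k) = Fin.succ k := (h _).mpr rfl
          have h2 : s 0 = Fin.succ k := hkl.mp h1
          exact (Fin.succ_ne_zero k).symm ((h 0).mp h2)
        constructor
        · intro h'
          exact absurd (Fin.succ_injective _ ((h _).mp h')) hkne
        · intro h'
          exact absurd ((h 0).mp h') (Fin.succ_ne_zero l).symm
    · by_cases h0 : s 0 = 0
      · exact Or.inl h0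
      · obtain ⟨k, hk⟩ := Fin.eq_succ_of_ne_zero h0
        rcases hA s hs k with h | h | h
        · exact absurd hk (h 0)
        · exact Or.inr ⟨Fin.succ k, h⟩
        · exact absurd ((h 0).mp hk) (Fin.succ_ne_zero k).symm
  · intro hB s hs k
    obtain ⟨h1, h2, h3⟩ := hB s hs
    rcases h3 with h0 | ⟨c, hc⟩
    · -- key: for l ≠ k, s (l.succ) ≠ k.succ
      have key : ∀ l : Fin n, l ≠ k → s (Fin.succ l) ≠ Fin.succ k := by
        intro l hlk h
        by_cases hll : s (Fin.succ l) = Fin.succ l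
        · exact hlk (Fin.succ_injective _ (hll.symm.trans h))
        · have hirr : s (Fin.succ l) = Fin.succ l ↔ s 0 = Fin.succ l := by
            constructor
            · intro h'; exact absurd h' hll
            · intro h'; exact absurd (h'.symm.trans h0) (Fin.succ_ne_zero l)
          have := (h2 l k hirr).mp h
          exact (Fin.succ_ne_zero k) (this.symm.trans h0)
      by_cases hsk : s (Fin.succ k) = Fin.succ k
      · refine Or.inr (Or.inr ?_)
        intro v
        induction v using Fin.cases with
        | zero =>
          constructor
          · intro h; exact absurd (h.symm.trans h0) (Fin.succ_ne_zero k)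
          · intro h; exact absurd h.symm (Fin.succ_ne_zero k)
        | succ l =>
          by_cases hlk : l = k
          · subst hlk; exact ⟨fun _ => rfl, fun _ => hsk⟩
          · constructor
            · intro h; exact absurd h (key l hlk)
            · intro h; exact absurd (Fin.succ_injective _ h) hlk
      · refine Or.inl ?_
        intro v
        induction v using Fin.cases with
        | zero =>
          intro h; exact (Fin.succ_ne_zero k) (h.symm.trans h0)
        | succ l =>
          by_cases hlk : l = k
          · subst hlk; exact hsk
          · exact key l hlk
    · by_cases hck : c = Fin.succ k
      · exact Or.inr (Or.inl (fun v => (hc v).trans hck))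
      · exact Or.inl (fun v h => hck ((hc v).symm.trans h))
end
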